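/- arXiv:0811.1204 — 3 statements merged into one kernel-verified Lean document; each statement's English description precedes it below -/
import Mathlib

section
/- Let M be a smooth compact oriented surface embedded in ℝ³, m(x) = x - x⁰, and φ : M → ℝ a C¹ function. Then the tangential gradient satisfies the identity ∇_T φ · ∇_T m_T · ∇_T φ = |∇_T φ|² + (m·ν)(∇_T φ · B · ∇_T φ), where B is the shape operator of M and m_T is the tangential component of m. -/
/-!
Differentiating `m_T = m - (m·ν) ν` in a tangent direction `v` gives
`v - (m·ν) dν(v) - (d(m·ν) v) ν`. Pairing with `v` kills the last term because `v ⊥ ν`,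
and `B = -dν` turns the middle term into `(m·ν)(v · B v)`.
-/

open scoped RealInnerProductSpace

section NormalComponent

variable {E : Type*} [NormedAddCommGroup E] [InnerProductSpace ℝ E] {m ν : E → E} {x : E}

theorem fderiv_inner_smul_apply (hm : DifferentiableAt ℝ m x) (hν : DifferentiableAt ℝ ν x)
    (v : E) :
    fderiv ℝ (fun y => ⟪m y, ν y⟫ • ν y) x v =
      ⟪m x, ν x⟫ • fderiv ℝ ν x v + (⟪m x, fderiv ℝ ν x v⟫ + ⟪fderiv ℝ m x v, ν x⟫) • ν x := by
  rw [fderiv_fun_smul (hm.inner ℝ hν) hν, add_apply, smul_apply,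
    ContinuousLinearMap.smulRight_apply, fderiv_inner_apply ℝ hm hν]

theorem inner_fderiv_inner_smul_apply_of_inner_eq_zero (hm : DifferentiableAt ℝ m x)
    (hν : DifferentiableAt ℝ ν x) {v : E} (hv : ⟪v, ν x⟫ = 0) :
    ⟪fderiv ℝ (fun y => ⟪m y, ν y⟫ • ν y) x v, v⟫ = ⟪m x, ν x⟫ * ⟪fderiv ℝ ν x v, v⟫ := by
  rw [fderiv_inner_smul_apply hm hν, inner_add_left, real_inner_smul_left,
    real_inner_smul_left, real_inner_comm v (ν x), hv, mul_zero, add_zero]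

end NormalComponent

/-- `v` plays the role of `∇_T φ`, `m y = y - x0`, and the shape operator is `B = -dν`. -/
theorem stmt_1_general (x0 x : EuclideanSpace ℝ (Fin 3))
    (ν : EuclideanSpace ℝ (Fin 3) → EuclideanSpace ℝ (Fin 3))
    (hν : DifferentiableAt ℝ ν x)
    (v : EuclideanSpace ℝ (Fin 3)) (hv : ⟪v, ν x⟫ = 0) :
    ⟪fderiv ℝ (fun y => (y - x0) - ⟪y - x0, ν y⟫ • ν y) x v, v⟫ =
      ‖v‖ ^ 2 + ⟪x - x0, ν x⟫ * ⟪-(fderiv ℝ ν x v), v⟫ := by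
  have hm : DifferentiableAt ℝ (fun y : EuclideanSpace ℝ (Fin 3) => y - x0) x :=
    differentiableAt_id.sub_const x0
  rw [fderiv_fun_sub hm ((hm.inner ℝ hν).fun_smul hν), sub_apply,
    inner_sub_left, inner_fderiv_inner_smul_apply_of_inner_eq_zero hm hν hv,
    fderiv_sub_const, fderiv_fun_id, ContinuousLinearMap.id_apply, real_inner_self_eq_norm_sq,
    inner_neg_left]
  ring

/-- Pointwise form of `∇_T φ · ∇_T m_T · ∇_T φ = |∇_T φ|² + (m·ν)(∇_T φ · B · ∇_T φ)`
on an embedded surface in ℝ³: for any tangent vector `v` (playing the role of `∇_T φ`)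
at `x`, with `m y = y - x0`, `m_T` its tangential part and `B = -dν` the shape operator. -/
theorem stmt_1 (x0 x : EuclideanSpace ℝ (Fin 3))
    (ν : EuclideanSpace ℝ (Fin 3) → EuclideanSpace ℝ (Fin 3))
    (hν : DifferentiableAt ℝ ν x) (hunit : ‖ν x‖ = 1)
    (htang : ∀ w, ⟪fderiv ℝ ν x w, ν x⟫ = 0)
    (v : EuclideanSpace ℝ (Fin 3)) (hv : ⟪v, ν x⟫ = 0) :
    ⟪fderiv ℝ (fun y => (y - x0) - ⟪y - x0, ν y⟫ • ν y) x v, v⟫ =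
      ‖v‖ ^ 2 + ⟪x - x0, ν x⟫ * ⟪-(fderiv ℝ ν x v), v⟫ :=
  stmt_1_general x0 x ν hν v hv
end

section
/- Let g : ℝ → ℝ be continuous, strictly increasing with g(0) = 0, g(s)s > 0 for s ≠ 0. Then there exists a concave, strictly increasing function h : [0,∞) → [0,∞) with h(0) = 0 such that h(s·g(s)) ≥ s² + g(s)² for all |s| ≤ 1. -/
/-!
Let `B` bound `s² + g(s)²` on `[-1, 1]`. For `ε > 0`, continuity at `0` and compactness give
`η > 0` such that `s g(s) < η` forces `s² + g(s)² ≤ ε` (as `s g(s) > 0` away from `0`), so the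
affine function `x ↦ (B / η) x + ε` lies above `s² + g(s)²` at `x = s g(s)`. The infimum of these
affine functions over `ε > 0` is concave, monotone and vanishes at `0`; adding `x` to it makes it
strictly increasing.
-/

open Set

noncomputable def affineInf {ι : Type*} (a b : ι → ℝ) (x : ℝ) : ℝ :=
  ⨅ i, a i * x + b i

section affineInf

variable {ι : Type*} {a b : ι → ℝ}

theorem affineInf_le (ha : 0 ≤ a) (hb : 0 ≤ b) {x : ℝ} (hx : 0 ≤ x) (i : ι) :
    affineInf a b x ≤ a i * x + b i :=
  ciInf_le ⟨0, by rintro _ ⟨j, rfl⟩; exact add_nonneg (mul_nonneg (ha j) hx) (hb j)⟩ i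

variable [Nonempty ι]

theorem le_affineInf {x c : ℝ} (h : ∀ i, c ≤ a i * x + b i) : c ≤ affineInf a b x :=
  le_ciInf h

theorem monotoneOn_affineInf (ha : 0 ≤ a) (hb : 0 ≤ b) :
    MonotoneOn (affineInf a b) (Ici 0) := fun x hx _ _ hxy =>
  le_affineInf fun i => (affineInf_le ha hb hx i).trans (by gcongr; exact ha i)

theorem concaveOn_affineInf (ha : 0 ≤ a) (hb : 0 ≤ b) : ConcaveOn ℝ (Ici 0) (affineInf a b) := by
  refine ⟨convex_Ici 0, fun x hx y hy s t hs ht hst => le_affineInf fun i => ?_⟩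
  simp only [smul_eq_mul]
  calc s * affineInf a b x + t * affineInf a b y
      ≤ s * (a i * x + b i) + t * (a i * y + b i) := by
        gcongr
        exacts [affineInf_le ha hb hx i, affineInf_le ha hb hy i]
    _ = a i * (s * x + t * y) + b i := by linear_combination b i * hst

end affineInf

theorem exists_concaveOn_strictMonoOn_majorant {α : Type*} {S : Set α} {X F : α → ℝ}
    (hX : ∀ s ∈ S, 0 ≤ X s) (hF : BddAbove (F '' S))
    (hlim : ∀ ε > 0, ∃ η > 0, ∀ s ∈ S, X s < η → F s ≤ ε) :
    ∃ h : ℝ → ℝ, ConcaveOn ℝ (Ici 0) h ∧ StrictMonoOn h (Ici 0) ∧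
      h 0 = 0 ∧ ∀ s ∈ S, F s ≤ h (X s) := by
  obtain ⟨B, hB⟩ := hF
  choose η hηpos hη using hlim
  set a : Ioi (0 : ℝ) → ℝ := fun ε => max B 0 / η ε ε.2
  set b : Ioi (0 : ℝ) → ℝ := fun ε => ε
  have ha : 0 ≤ a := fun ε => div_nonneg (le_max_right B 0) (hηpos ε ε.2).le
  have hb : 0 ≤ b := fun ε => le_of_lt ε.2
  refine ⟨fun x => x + affineInf a b x,
    (concaveOn_id (convex_Ici 0)).add (concaveOn_affineInf ha hb),
    strictMonoOn_id.add_monotone (monotoneOn_affineInf ha hb), ?_, fun s hs => ?_⟩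
  · show 0 + affineInf a b 0 = 0
    simp only [affineInf, a, b, mul_zero, zero_add, iInf, Subtype.range_coe]
    exact csInf_Ioi
  · refine le_add_of_nonneg_of_le (hX s hs) (le_affineInf fun ε => ?_)
    have hε := hηpos ε ε.2
    rcases lt_or_ge (X s) (η ε ε.2) with hXs | hXs
    · calc F s ≤ ε := hη ε ε.2 s hs hXs
        _ ≤ a ε * X s + b ε := le_add_of_nonneg_left (mul_nonneg (ha ε) (hX s hs))
    · calc F s ≤ max B 0 := (hB (mem_image_of_mem F hs)).trans (le_max_left B 0)
        _ = a ε * η ε ε.2 := (div_mul_cancel₀ _ hε.ne').symm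
        _ ≤ a ε * X s + b ε := le_add_of_le_of_nonneg (by gcongr) (hb ε)

theorem IsCompact.exists_pos_forall_lt_imp_dist_lt {E : Type*} [PseudoMetricSpace E]
    {K : Set E} (hK : IsCompact K) {X : E → ℝ} (hX : ContinuousOn X K) {x₀ : E}
    (hpos : ∀ x ∈ K, x ≠ x₀ → 0 < X x) {δ : ℝ} (hδ : 0 < δ) :
    ∃ η > 0, ∀ x ∈ K, X x < η → dist x x₀ < δ := by
  have hK' : IsCompact (K ∩ {x | δ ≤ dist x x₀}) :=
    hK.inter_right (isClosed_le continuous_const (continuous_id.dist continuous_const))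
  obtain ⟨η, hη, hXη⟩ := hK'.exists_forall_le' (hX.mono inter_subset_left)
    fun x hx => hpos x hx.1 fun h => by simp [h] at hx; linarith [hx.2]
  exact ⟨η, hη, fun x hx hXx => not_le.1 fun hd => (hXη x ⟨hx, hd⟩).not_gt hXx⟩

theorem stmt_7_general (g : ℝ → ℝ) (hcont : Continuous g)
    (h0 : g 0 = 0) (hsign : ∀ s : ℝ, s ≠ 0 → g s * s > 0) :
    ∃ h : ℝ → ℝ, ConcaveOn ℝ (Set.Ici 0) h ∧ StrictMonoOn h (Set.Ici 0) ∧
      h 0 = 0 ∧ ∀ s : ℝ, |s| ≤ 1 → s ^ 2 + g s ^ 2 ≤ h (s * g s) := by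
  have hpos : ∀ s : ℝ, s ≠ 0 → 0 < s * g s := fun s hs => mul_comm s (g s) ▸ hsign s hs
  have hX : ∀ s ∈ Icc (-1 : ℝ) 1, 0 ≤ s * g s := fun s _ => by
    rcases eq_or_ne s 0 with rfl | hs
    · simp
    · exact (hpos s hs).le
  have hlim : ∀ ε > 0, ∃ η > 0, ∀ s ∈ Icc (-1 : ℝ) 1, s * g s < η → s ^ 2 + g s ^ 2 ≤ ε := by
    intro ε hε
    obtain ⟨δ, hδ, hFδ⟩ := Metric.continuousAt_iff.1
      (show Continuous fun s => s ^ 2 + g s ^ 2 by fun_prop).continuousAt ε hε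
    obtain ⟨η, hη, hXη⟩ := isCompact_Icc.exists_pos_forall_lt_imp_dist_lt
      (show Continuous fun s => s * g s by fun_prop).continuousOn (fun s _ => hpos s) hδ
    refine ⟨η, hη, fun s hs hXs => ?_⟩
    have hF := hFδ (hXη s hs hXs)
    rw [Real.dist_eq, h0] at hF
    norm_num at hF
    exact (le_abs_self _).trans hF.le
  obtain ⟨h, hconc, hmono, hzero, hmaj⟩ := exists_concaveOn_strictMonoOn_majorant hX
    (isCompact_Icc.bddAbove_image (by fun_prop)) hlim
  exact ⟨h, hconc, hmono, hzero, fun s hs => hmaj s (abs_le.1 hs)⟩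

/-- Existence of the Lasiecka–Tataru concave majorant: if `g` is continuous, strictly
increasing, `g(0) = 0` and `g(s)s > 0` for `s ≠ 0`, then there is a concave, strictly
increasing `h` on `[0, ∞)` with `h(0) = 0` such that `h(s g(s)) ≥ s² + g(s)²` for
all `|s| ≤ 1`. -/
theorem stmt_7 (g : ℝ → ℝ) (hcont : Continuous g) (hsm : StrictMono g)
    (h0 : g 0 = 0) (hsign : ∀ s : ℝ, s ≠ 0 → g s * s > 0) :
    ∃ h : ℝ → ℝ, ConcaveOn ℝ (Set.Ici 0) h ∧ StrictMonoOn h (Set.Ici 0) ∧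
      h 0 = 0 ∧ ∀ s : ℝ, |s| ≤ 1 → s ^ 2 + g s ^ 2 ≤ h (s * g s) :=
  stmt_7_general g hcont h0 hsign
end

section
/- Let p : [0,∞) → [0,∞) be a continuous, positive (for x > 0), strictly increasing function with p(0) = 0, and define q(x) = x - (I + p)⁻¹(x). Let (s_m) be a sequence of nonnegative numbers satisfying s_{m+1} + p(s_{m+1}) ≤ s_m for all m. Then s_m ≤ S(m) for all m, where S is the solution of the ODE S'(t) + q(S(t)) = 0 with S(0) = s₀. Moreover, if p(x) > 0 for x > 0 then S(t) → 0 as t → ∞. -/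
/-!
Since `q = p ∘ (I + p)⁻¹` is monotone and nonnegative, the solution `S` decreases, and on
`[m, m + 1]` its speed `q (S t)` is at most `q (S m)`; hence `S (m + 1) ≥ S m - q (S m) =
(I + p)⁻¹ (S m)`. The recursion says `s (m + 1) ≤ (I + p)⁻¹ (s m)`, so induction with the
monotonicity of `(I + p)⁻¹` gives `s m ≤ S m`. Finally `q > 0` on `(0, ∞)`: if `S` stayed above
some `ε > 0` it would decrease at rate at least `q ε` forever and become negative.
-/

open Filter Set

namespace LasieckaTataru

section Resolvent

variable {p ip q : ℝ → ℝ}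

lemma le_ip_of_add_le (hpm : StrictMonoOn p (Ici 0))
    (hip : ∀ x ≥ (0:ℝ), 0 ≤ ip x ∧ ip x + p (ip x) = x) {x y : ℝ} (hx : 0 ≤ x) (hy : 0 ≤ y)
    (h : y + p y ≤ x) : y ≤ ip x := by
  have hF : StrictMonoOn (fun z => z + p z) (Ici 0) := fun a ha b hb hab =>
    add_lt_add hab (hpm ha hb hab)
  exact (hF.le_iff_le hy (hip x hx).1).1 (h.trans_eq (hip x hx).2.symm)

lemma ip_monotoneOn (hpm : StrictMonoOn p (Ici 0))
    (hip : ∀ x ≥ (0:ℝ), 0 ≤ ip x ∧ ip x + p (ip x) = x) : MonotoneOn ip (Ici 0) :=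
  fun x hx _ hy hxy => le_ip_of_add_le hpm hip hy (hip x hx).1 ((hip x hx).2.le.trans hxy)

lemma q_eq_p_ip (hip : ∀ x ≥ (0:ℝ), 0 ≤ ip x ∧ ip x + p (ip x) = x)
    (hq : ∀ x ≥ (0:ℝ), q x = x - ip x) {x : ℝ} (hx : 0 ≤ x) : q x = p (ip x) := by
  linarith [hq x hx, (hip x hx).2]

lemma q_monotoneOn (hpm : StrictMonoOn p (Ici 0))
    (hip : ∀ x ≥ (0:ℝ), 0 ≤ ip x ∧ ip x + p (ip x) = x)
    (hq : ∀ x ≥ (0:ℝ), q x = x - ip x) : MonotoneOn q (Ici 0) := by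
  intro x hx y hy hxy
  rw [q_eq_p_ip hip hq hx, q_eq_p_ip hip hq hy]
  exact hpm.monotoneOn (hip x hx).1 (hip y hy).1 (ip_monotoneOn hpm hip hx hy hxy)

lemma q_nonneg (hp0 : p 0 = 0) (hpm : StrictMonoOn p (Ici 0))
    (hip : ∀ x ≥ (0:ℝ), 0 ≤ ip x ∧ ip x + p (ip x) = x)
    (hq : ∀ x ≥ (0:ℝ), q x = x - ip x) {x : ℝ} (hx : 0 ≤ x) : 0 ≤ q x := by
  rw [q_eq_p_ip hip hq hx, ← hp0]
  exact hpm.monotoneOn self_mem_Ici (hip x hx).1 (hip x hx).1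

lemma q_pos (hp0 : p 0 = 0) (hpm : StrictMonoOn p (Ici 0))
    (hip : ∀ x ≥ (0:ℝ), 0 ≤ ip x ∧ ip x + p (ip x) = x)
    (hq : ∀ x ≥ (0:ℝ), q x = x - ip x) {x : ℝ} (hx : 0 < x) : 0 < q x := by
  obtain ⟨hipx, hx_eq⟩ := hip x hx.le
  have hip_pos : 0 < ip x := by
    refine hipx.lt_of_ne fun h => hx.ne ?_
    rw [← hx_eq, ← h, hp0, add_zero]
  rw [q_eq_p_ip hip hq hx.le, ← hp0]
  exact hpm self_mem_Ici hipx hip_pos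

end Resolvent

section Flow

variable {g S : ℝ → ℝ}

lemma antitoneOn_of_hasDerivAt_neg (hode : ∀ t ≥ (0:ℝ), HasDerivAt S (-(g (S t))) t)
    (hg : ∀ t ≥ (0:ℝ), 0 ≤ g (S t)) : AntitoneOn S (Ici 0) := by
  refine antitoneOn_of_deriv_nonpos (convex_Ici 0)
    (fun t ht => (hode t ht).continuousAt.continuousWithinAt) ?_ ?_ <;> rw [interior_Ici]
  · exact fun t ht => (hode t (ht.le)).differentiableAt.differentiableWithinAt
  · intro t ht
    rw [(hode t (ht.le)).deriv]
    exact neg_nonpos.2 (hg t (ht.le))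

lemma sub_le_add_one (hode : ∀ t ≥ (0:ℝ), HasDerivAt S (-(g (S t))) t)
    (hSnn : ∀ t ≥ (0:ℝ), 0 ≤ S t) (hgm : MonotoneOn g (Ici 0)) (hg0 : ∀ x ≥ (0:ℝ), 0 ≤ g x)
    {a : ℝ} (ha : 0 ≤ a) : S a - g (S a) ≤ S (a + 1) := by
  have hanti := antitoneOn_of_hasDerivAt_neg hode fun t ht => hg0 _ (hSnn t ht)
  have hIcc : ∀ t ∈ Icc a (a + 1), (0:ℝ) ≤ t := fun t ht => ha.trans ht.1
  have hmvt := Convex.mul_sub_le_image_sub_of_le_deriv (convex_Icc a (a + 1)) (f := S)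
    (fun t ht => (hode t (hIcc t ht)).continuousAt.continuousWithinAt)
    (fun t ht => (hode t (hIcc t (interior_subset ht))).differentiableAt.differentiableWithinAt)
    (C := -g (S a)) (fun t ht => ?_) a (left_mem_Icc.2 (by linarith))
    (a + 1) (right_mem_Icc.2 (by linarith)) (by linarith)
  · linarith
  · have ht0 := hIcc t (interior_subset ht)
    rw [interior_Icc] at ht
    rw [(hode t ht0).deriv, neg_le_neg_iff]
    exact hgm (hSnn t ht0) (hSnn a ha) (hanti ha ht0 ht.1.le)

lemma exists_lt_of_rate_pos (hode : ∀ t ≥ (0:ℝ), HasDerivAt S (-(g (S t))) t)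
    (hSnn : ∀ t ≥ (0:ℝ), 0 ≤ S t) (hgm : MonotoneOn g (Ici 0)) {ε : ℝ} (hε : 0 < ε)
    (hgε : 0 < g ε) : ∃ t ≥ (0:ℝ), S t < ε := by
  by_contra! h
  set T := (S 0 + 1) / g ε
  have hT : 0 ≤ T := div_nonneg (by linarith [hSnn 0 le_rfl]) hgε.le
  have hmvt := Convex.image_sub_le_mul_sub_of_deriv_le (convex_Ici 0) (f := S)
    (fun t ht => (hode t ht).continuousAt.continuousWithinAt)
    (fun t ht => (hode t (interior_subset ht)).differentiableAt.differentiableWithinAt)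
    (C := -g ε) (fun t ht => ?_) 0 self_mem_Ici T hT hT
  · have : g ε * T = S 0 + 1 := mul_div_cancel₀ _ hgε.ne'
    linarith [hSnn T hT]
  · have ht0 := interior_subset (s := Ici (0:ℝ)) ht
    rw [(hode t ht0).deriv, neg_le_neg_iff]
    exact hgm hε.le (hSnn t ht0) (h t ht0)

lemma tendsto_atTop_zero (hode : ∀ t ≥ (0:ℝ), HasDerivAt S (-(g (S t))) t)
    (hSnn : ∀ t ≥ (0:ℝ), 0 ≤ S t) (hgm : MonotoneOn g (Ici 0)) (hg0 : ∀ x ≥ (0:ℝ), 0 ≤ g x)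
    (hgpos : ∀ x > (0:ℝ), 0 < g x) : Tendsto S atTop (nhds 0) := by
  have hanti := antitoneOn_of_hasDerivAt_neg hode fun t ht => hg0 _ (hSnn t ht)
  refine tendsto_order.2 ⟨fun b hb => eventually_atTop.2 ⟨0, fun t ht => hb.trans_le (hSnn t ht)⟩,
    fun ε hε => ?_⟩
  obtain ⟨t₀, ht₀, hSt₀⟩ := exists_lt_of_rate_pos hode hSnn hgm hε (hgpos ε hε)
  exact eventually_atTop.2 ⟨t₀, fun t ht => (hanti ht₀ (ht₀.trans ht) ht).trans_lt hSt₀⟩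

end Flow

end LasieckaTataru

open LasieckaTataru in
theorem stmt_9_general (p ip q S : ℝ → ℝ) (s : ℕ → ℝ)
    (hp0 : p 0 = 0)
    (hpm : StrictMonoOn p (Set.Ici 0))
    (hip : ∀ x ≥ (0:ℝ), 0 ≤ ip x ∧ ip x + p (ip x) = x)
    (hq : ∀ x ≥ (0:ℝ), q x = x - ip x)
    (hS0 : S 0 = s 0) (hSnn : ∀ t ≥ (0:ℝ), 0 ≤ S t)
    (hode : ∀ t ≥ (0:ℝ), HasDerivAt S (-(q (S t))) t)
    (hsnn : ∀ m, 0 ≤ s m)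
    (hrec : ∀ m, s (m + 1) + p (s (m + 1)) ≤ s m) :
    (∀ m : ℕ, s m ≤ S m) ∧ Tendsto S atTop (nhds 0) := by
  have hqm := q_monotoneOn hpm hip hq
  have hq0 : ∀ x ≥ (0:ℝ), 0 ≤ q x := fun x hx => q_nonneg hp0 hpm hip hq hx
  refine ⟨fun m => ?_, tendsto_atTop_zero hode hSnn hqm hq0 fun x hx => q_pos hp0 hpm hip hq hx⟩
  induction m with
  | zero => simp [hS0]
  | succ n ih =>
    have hSn := hSnn n n.cast_nonneg
    calc s (n + 1) ≤ ip (s n) := le_ip_of_add_le hpm hip (hsnn n) (hsnn (n + 1)) (hrec n)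
      _ ≤ ip (S n) := ip_monotoneOn hpm hip (hsnn n) hSn ih
      _ = S n - q (S n) := by rw [hq _ hSn, sub_sub_cancel]
      _ ≤ S ((n + 1 : ℕ) : ℝ) := by
        rw [Nat.cast_succ]; exact sub_le_add_one hode hSnn hqm hq0 n.cast_nonneg

/-- Lemma B of Lasiecka–Tataru: let `p : [0,∞) → [0,∞)` be continuous, strictly
increasing, `p(0) = 0`, `p > 0` on `(0,∞)`; let `ip = (I + p)⁻¹` and
`q(x) = x - ip(x)`. If `S` solves `S' + q(S) = 0`, `S(0) = s₀`, and the nonnegative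
sequence `(s_m)` satisfies `s_{m+1} + p(s_{m+1}) ≤ s_m`, then `s_m ≤ S(m)` for all `m`,
and `S(t) → 0` as `t → ∞`. -/
theorem stmt_9 (p ip q S : ℝ → ℝ) (s : ℕ → ℝ)
    (hpc : ContinuousOn p (Set.Ici 0)) (hp0 : p 0 = 0)
    (hpm : StrictMonoOn p (Set.Ici 0)) (hppos : ∀ x > (0:ℝ), 0 < p x)
    (hip : ∀ x ≥ (0:ℝ), 0 ≤ ip x ∧ ip x + p (ip x) = x)
    (hq : ∀ x ≥ (0:ℝ), q x = x - ip x)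
    (hS0 : S 0 = s 0) (hSnn : ∀ t ≥ (0:ℝ), 0 ≤ S t)
    (hode : ∀ t ≥ (0:ℝ), HasDerivAt S (-(q (S t))) t)
    (hsnn : ∀ m, 0 ≤ s m)
    (hrec : ∀ m, s (m + 1) + p (s (m + 1)) ≤ s m) :
    (∀ m : ℕ, s m ≤ S m) ∧ Tendsto S atTop (nhds 0) :=
  stmt_9_general p ip q S s hp0 hpm hip hq hS0 hSnn hode hsnn hrec
end
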